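/- Assume hypotheses (H1) and (H2) and the family setup below, and for each ε ∈ (0,1/2) let ν_ε be the probability measure on (0,∞) with density η_ε(x)·e^{−2Q(x)}·1_{(ε,1/ε)}(x) / ∫_ε^{1/ε} η_ε(y)·e^{−2Q(y)} dy with respect to Lebesgue measure. Then: (i) the family (ν_ε)_{ε ∈ (0,1/2)} is tight, i.e., for every δ > 0 there exists a compact set K ⊂ (0,∞) with ν_ε((0,∞) ∖ K) ≤ δ for all ε ∈ (0,1/2); (ii) for every sequence ε_k → 0 such that ν_{ε_k} converges weakly to a probability measure ν on (0,∞), the limit ν is absolutely continuous with respect to Lebesgue measure. -/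

import Mathlib

/-!
Write `u = η e^{-Q}` for the ground-state transform of an eigenfunction. It solves
`u'' = (W - 2λ) u` with `u = 0` at the ends, so integrating `(u u')'` gives
`∫ u'² + ∫ W u² = 2λ`. With `∫ u² = 1` and `W ≥ -C` this bounds `∫ u'²`, `sup u²` and
`∫ (W + C + 1) u²` uniformly in `ε`. The density of `ν_ε` is proportional to `u e^{-Q}`; by
AM-GM, `u e^{-Q} ≤ (t/2) (W + C + 1) u² + e^{-2Q} / (2t (W + C + 1))`, so (H2) makes the mass of
`u e^{-Q}` near `0` and near `∞` uniformly small. The normalising constants are bounded below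
because a definite part of `∫ u² = 1` lives on a fixed compact interval, where `u ≤ sup u` and
`e^{-Q}` is bounded below. Hence the family is tight, and on each compact subinterval the
densities are uniformly bounded, so the `ν_ε` are uniformly absolutely continuous up to a small
error; the portmanteau theorem carries this to any weak limit.
-/

open MeasureTheory intervalIntegral Filter BoundedContinuousFunction
open Set Real Topology

section Integrals

theorem setIntegral_Ioo_eq_intervalIntegral {a b : ℝ} (hab : a ≤ b) (f : ℝ → ℝ) :
    ∫ x in Ioo a b, f x = ∫ x in a..b, f x := by
  rw [integral_of_le hab, integral_Ioc_eq_integral_Ioo]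

theorem hasDerivAt_integral_of_continuousOn {f : ℝ → ℝ} {s : Set ℝ} (hs : IsOpen s)
    (hs' : s.OrdConnected) (hf : ContinuousOn f s) {a x : ℝ} (ha : a ∈ s) (hx : x ∈ s) :
    HasDerivAt (fun y => ∫ t in a..y, f t) (f x) x :=
  integral_hasDerivAt_right (hf.mono (hs'.uIcc_subset ha hx)).intervalIntegrable
    (hf.stronglyMeasurableAtFilter hs x hx) (hf.continuousAt (hs.mem_nhds hx))

theorem integrableOn_Ioi_of_integrableOn_Ioo {f h : ℝ → ℝ} {a b : ℝ} (hab : a < b)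
    (hf : ContinuousOn f (Ioi a)) (hfab : IntegrableOn f (Ioo a b)) (hh : IntegrableOn h (Ioi b))
    (hfh : ∀ x ∈ Ioi b, ‖f x‖ ≤ h x) : IntegrableOn f (Ioi a) := by
  rw [← Ioo_union_Ici_eq_Ioi hab, integrableOn_union, integrableOn_Ici_iff_integrableOn_Ioi]
  exact ⟨hfab, hh.mono' ((hf.mono (Ioi_subset_Ioi hab.le)).aestronglyMeasurable measurableSet_Ioi)
    ((ae_restrict_iff' measurableSet_Ioi).mpr (ae_of_all _ hfh))⟩

theorem exists_setIntegral_Ioi_diff_Icc_lt {f : ℝ → ℝ} (hf : IntegrableOn f (Ioi 0)) {τ : ℝ}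
    (hτ : 0 < τ) : ∃ a M, 0 < a ∧ ∫ x in Ioi 0 \ Icc a M, f x < τ := by
  set T : ℕ → Set ℝ := fun n => Ioi 0 \ Icc (1 / (n + 1)) (n + 1)
  have hanti : Antitone T := fun m n hmn =>
    sdiff_subset_sdiff_right (Icc_subset_Icc (by gcongr) (by gcongr))
  have hempty : ⋂ n, T n = ∅ := by
    refine eq_empty_of_forall_notMem fun x hx => ?_
    have hx0 : 0 < x := (mem_iInter.mp hx 0).1
    obtain ⟨n, hn⟩ := exists_nat_gt (max x x⁻¹)
    refine (mem_iInter.mp hx n).2 ⟨?_, by linarith [le_max_left x x⁻¹]⟩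
    rw [one_div_le (by positivity) hx0, one_div]
    linarith [le_max_right x x⁻¹]
  have hlim := tendsto_setIntegral_of_antitone (fun n => measurableSet_Ioi.diff measurableSet_Icc)
    hanti ⟨0, hf.mono_set sdiff_subset⟩
  rw [hempty, setIntegral_empty] at hlim
  obtain ⟨n, hn⟩ := (hlim.eventually_lt_const hτ).exists
  exact ⟨1 / (n + 1), n + 1, by positivity, hn⟩

theorem integrableOn_indicator_Iic_const_and_le {s : Set ℝ} (hs : s ⊆ Ioi 0) {a K : ℝ}
    (ha : 0 ≤ a) (hK : 0 ≤ K) :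
    IntegrableOn ((Iic a).indicator fun _ => K) s ∧
      ∫ x in s, (Iic a).indicator (fun _ => K) x ≤ a * K := by
  have hsub : Iic a ∩ s ⊆ Ioc 0 a := fun x hx => ⟨hs hx.2, hx.1⟩
  have hfin : volume (Iic a ∩ s) ≠ ⊤ := ((measure_mono hsub).trans_lt measure_Ioc_lt_top).ne
  refine ⟨(integrableOn_const (by rwa [Measure.restrict_apply measurableSet_Iic])
    ).integrable_indicator measurableSet_Iic, ?_⟩
  rw [integral_indicator_const _ measurableSet_Iic, smul_eq_mul,
    measureReal_restrict_apply measurableSet_Iic]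
  have : volume.real (Iic a ∩ s) ≤ a :=
    (measureReal_mono hsub measure_Ioc_lt_top.ne).trans (by simp [Real.volume_real_Ioc, ha])
  exact mul_le_mul_of_nonneg_right this hK

theorem setIntegral_mul_le_of_weight {α : Type*} [MeasurableSpace α] {μ : Measure α} {s : Set α}
    {u g w : α → ℝ} {t : ℝ} (ht : 0 < t) (hs : MeasurableSet s) (hw : ∀ x ∈ s, 0 < w x)
    (hug : IntegrableOn (fun x => u x * g x) s μ) (hwu : IntegrableOn (fun x => w x * u x ^ 2) s μ)
    (hgw : IntegrableOn (fun x => g x ^ 2 / w x) s μ) :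
    ∫ x in s, u x * g x ∂μ ≤
      t / 2 * ∫ x in s, w x * u x ^ 2 ∂μ + 1 / (2 * t) * ∫ x in s, g x ^ 2 / w x ∂μ := by
  rw [← MeasureTheory.integral_const_mul, ← MeasureTheory.integral_const_mul,
    ← MeasureTheory.integral_add (hwu.const_mul _) (hgw.const_mul _)]
  refine setIntegral_mono_on hug ((hwu.const_mul _).add (hgw.const_mul _)) hs fun x hx => ?_
  have hwx := hw x hx
  have hamgm : t / 2 * (w x * u x ^ 2) + 1 / (2 * t) * (g x ^ 2 / w x) - u x * g x =
      (t * w x * u x - g x) ^ 2 / (2 * t * w x) := by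
    field_simp
    ring
  rw [← sub_nonneg, hamgm]
  positivity

end Integrals

section NormalizedDensity

variable {α : Type*} [MeasurableSpace α] {μ : Measure α} {s A : Set α} {f : α → ℝ}

noncomputable def normalizedWithDensity (μ : Measure α) (s : Set α) (f : α → ℝ) : Measure α :=
  μ.withDensity fun x => ENNReal.ofReal (s.indicator f x / ∫ y in s, f y ∂μ)

theorem normalizedWithDensity_apply (hs : MeasurableSet s) (hf : IntegrableOn f s μ)
    (hf0 : ∀ x ∈ s, 0 ≤ f x) (hA : MeasurableSet A) :
    normalizedWithDensity μ s f A = ENNReal.ofReal ((∫ x in A ∩ s, f x ∂μ) / ∫ x in s, f x ∂μ) := by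
  have hZ : 0 ≤ ∫ x in s, f x ∂μ := setIntegral_nonneg hs hf0
  rw [normalizedWithDensity, withDensity_apply _ hA, ← ofReal_integral_eq_lintegral_ofReal
    ((hf.integrable_indicator hs).div_const _).restrict
    (ae_of_all _ fun x => div_nonneg (indicator_nonneg hf0 x) hZ),
    MeasureTheory.integral_div, setIntegral_indicator hs]

theorem isProbabilityMeasure_normalizedWithDensity (hs : MeasurableSet s) (hf : IntegrableOn f s μ)
    (hf0 : ∀ x ∈ s, 0 ≤ f x) (hZ : ∫ x in s, f x ∂μ ≠ 0) :
    IsProbabilityMeasure (normalizedWithDensity μ s f) :=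
  ⟨by rw [normalizedWithDensity_apply hs hf hf0 MeasurableSet.univ, univ_inter, div_self hZ,
    ENNReal.ofReal_one]⟩

end NormalizedDensity

theorem absolutelyContinuous_of_forall_integral_tendsto {Ω ι : Type*} [MeasurableSpace Ω]
    [TopologicalSpace Ω] [OpensMeasurableSpace Ω] [HasOuterApproxClosed Ω] {ρ : Measure Ω}
    [ρ.OuterRegular] {L : Filter ι} [L.NeBot] {μs : ι → Measure Ω}
    [∀ i, IsProbabilityMeasure (μs i)] {μ : Measure Ω} [IsProbabilityMeasure μ]
    (hμ : ∀ f : Ω →ᵇ ℝ, Tendsto (fun i => ∫ x, f x ∂μs i) L (𝓝 (∫ x, f x ∂μ)))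
    (hbound : ∀ δ > 0, ∃ c, ∀ i A, MeasurableSet A →
      μs i A ≤ ENNReal.ofReal c * ρ A + ENNReal.ofReal δ) :
    μ ≪ ρ := by
  refine Measure.AbsolutelyContinuous.mk fun s _ hs => nonpos_iff_eq_zero.mp ?_
  let P : ι → ProbabilityMeasure Ω := fun i => ⟨μs i, inferInstance⟩
  have hlim : Tendsto P L (𝓝 ⟨μ, inferInstance⟩) :=
    ProbabilityMeasure.tendsto_iff_forall_integral_tendsto.mpr hμ
  refine ENNReal.le_of_forall_pos_le_add fun ε hε _ => ?_
  obtain ⟨c, hc⟩ := hbound (ε / 2) (by positivity)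
  set c' := max c 1
  obtain ⟨U, hsU, hU, hρU⟩ := s.exists_isOpen_lt_of_lt (ENNReal.ofReal (ε / 2 / c'))
    (by rw [hs]; exact ENNReal.ofReal_pos.mpr (by positivity))
  have hcU : ENNReal.ofReal c * ρ U ≤ ENNReal.ofReal (ε / 2) :=
    calc ENNReal.ofReal c * ρ U ≤ ENNReal.ofReal c' * ENNReal.ofReal (ε / 2 / c') := by
          gcongr
          exact le_max_left c 1
      _ = ENNReal.ofReal (ε / 2) := by
          rw [← ENNReal.ofReal_mul (by positivity), mul_div_cancel₀ _ (by positivity)]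
  calc μ s ≤ μ U := measure_mono hsU
    _ ≤ L.liminf fun i => μs i U := ProbabilityMeasure.le_liminf_measure_open_of_tendsto hlim hU
    _ ≤ ENNReal.ofReal c * ρ U + ENNReal.ofReal (ε / 2) :=
        liminf_le_of_frequently_le' (Frequently.of_forall fun i => hc i U hU.measurableSet)
    _ ≤ ENNReal.ofReal (ε / 2) + ENNReal.ofReal (ε / 2) := by gcongr
    _ = 0 + ε := by
        rw [zero_add, ← ENNReal.ofReal_add (by positivity) (by positivity), add_halves,
          ENNReal.ofReal_coe_nnreal]

section GroundState

variable {a b : ℝ} {u v V : ℝ → ℝ}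

theorem integral_deriv_sq_add_mul_sq_eq_zero (hab : a ≤ b)
    (hu : ∀ x ∈ Icc a b, HasDerivAt u (v x) x) (hv : ∀ x ∈ Icc a b, HasDerivAt v (V x * u x) x)
    (hV : ContinuousOn V (Icc a b)) (ha : u a = 0) (hb : u b = 0) :
    ∫ x in a..b, (v x ^ 2 + V x * u x ^ 2) = 0 := by
  have hcu : ContinuousOn u (Icc a b) := fun x hx => (hu x hx).continuousAt.continuousWithinAt
  have hcv : ContinuousOn v (Icc a b) := fun x hx => (hv x hx).continuousAt.continuousWithinAt
  have hflux : ∀ x ∈ uIcc a b, HasDerivAt (fun y => u y * v y) (v x ^ 2 + V x * u x ^ 2) x := by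
    intro x hx
    rw [uIcc_of_le hab] at hx
    exact ((hu x hx).fun_mul (hv x hx)).congr_deriv (by ring)
  rw [integral_eq_sub_of_hasDerivAt hflux
    (((hcv.pow 2).add (hV.mul (hcu.pow 2))).intervalIntegrable_of_Icc hab)]
  simp [ha, hb]

theorem sq_le_integral_sq_add_deriv_sq (hab : a ≤ b) (hu : ∀ x ∈ Icc a b, HasDerivAt u (v x) x)
    (hv : ContinuousOn v (Icc a b)) (ha : u a = 0) {x : ℝ} (hx : x ∈ Icc a b) :
    u x ^ 2 ≤ (∫ y in a..b, u y ^ 2) + ∫ y in a..b, v y ^ 2 := by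
  have hcu : ContinuousOn u (Icc a b) := fun x hx => (hu x hx).continuousAt.continuousWithinAt
  have hsub : Icc a x ⊆ Icc a b := Icc_subset_Icc_right hx.2
  have iu2 : IntervalIntegrable (fun y => u y ^ 2) volume a b :=
    (hcu.pow 2).intervalIntegrable_of_Icc hab
  have iv2 : IntervalIntegrable (fun y => v y ^ 2) volume a b :=
    (hv.pow 2).intervalIntegrable_of_Icc hab
  have iuv : IntervalIntegrable (fun y => 2 * u y * v y) volume a x :=
    ((continuousOn_const.mul (hcu.mono hsub)).mul (hv.mono hsub)).intervalIntegrable_of_Icc hx.1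
  have hsq : ∀ y ∈ uIcc a x, HasDerivAt (fun z => u z ^ 2) (2 * u y * v y) y := by
    intro y hy
    rw [uIcc_of_le hx.1] at hy
    exact ((hu y (hsub hy)).fun_pow 2).congr_deriv (by ring)
  calc u x ^ 2 = ∫ y in a..x, 2 * u y * v y := by
        rw [integral_eq_sub_of_hasDerivAt hsq iuv, ha]
        ring
    _ ≤ ∫ y in a..x, (u y ^ 2 + v y ^ 2) :=
        integral_mono_on hx.1 iuv
          ((iu2.add iv2).mono_set (by rw [uIcc_of_le hx.1, uIcc_of_le hab]; exact hsub))
          (fun y _ => by nlinarith [sq_nonneg (u y - v y)])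
    _ ≤ ∫ y in a..b, (u y ^ 2 + v y ^ 2) :=
        integral_mono_interval le_rfl hx.1 hx.2 (ae_of_all _ fun y => by positivity) (iu2.add iv2)
    _ = (∫ y in a..b, u y ^ 2) + ∫ y in a..b, v y ^ 2 := integral_add iu2 iv2

theorem integral_deriv_sq_add_integral_mul_sq {lam : ℝ} {W : ℝ → ℝ} (hab : a ≤ b)
    (hu : ∀ x ∈ Icc a b, HasDerivAt u (v x) x)
    (hv : ∀ x ∈ Icc a b, HasDerivAt v ((W x - 2 * lam) * u x) x) (hW : ContinuousOn W (Icc a b))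
    (ha : u a = 0) (hb : u b = 0) :
    (∫ x in a..b, v x ^ 2) + ∫ x in a..b, W x * u x ^ 2 = 2 * lam * ∫ x in a..b, u x ^ 2 := by
  have hcu : ContinuousOn u (Icc a b) := fun x hx => (hu x hx).continuousAt.continuousWithinAt
  have hcv : ContinuousOn v (Icc a b) := fun x hx => (hv x hx).continuousAt.continuousWithinAt
  have iu2 : IntervalIntegrable (fun x => u x ^ 2) volume a b :=
    (hcu.pow 2).intervalIntegrable_of_Icc hab
  have iWu2 : IntervalIntegrable (fun x => W x * u x ^ 2) volume a b :=
    (hW.mul (hcu.pow 2)).intervalIntegrable_of_Icc hab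
  have iv2 : IntervalIntegrable (fun x => v x ^ 2) volume a b :=
    (hcv.pow 2).intervalIntegrable_of_Icc hab
  have h := integral_deriv_sq_add_mul_sq_eq_zero hab hu hv (hW.sub continuousOn_const) ha hb
  simp only [sub_mul] at h
  rw [integral_add iv2 (iWu2.sub (iu2.const_mul _)),
    integral_sub iWu2 (iu2.const_mul _), intervalIntegral.integral_const_mul] at h
  linarith

end GroundState

section Eigenfunction

variable {η η' η'' q q' Q : ℝ → ℝ} {lam x : ℝ}

theorem hasDerivAt_mul_exp_neg (hη : HasDerivAt η (η' x) x) (hQ : HasDerivAt Q (q x) x) :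
    HasDerivAt (fun y => η y * exp (-Q y)) ((η' x - q x * η x) * exp (-Q x)) x :=
  (hη.fun_mul hQ.fun_neg.exp).congr_deriv (by ring)

/-- The ground-state transform `u = η e^{-Q}` turns `½ η'' - q η' = -λ η` into the Schrödinger
equation `u'' = (q² - q' - 2λ) u`. -/
theorem hasDerivAt_deriv_mul_exp_neg (hη : HasDerivAt η (η' x) x) (hη' : HasDerivAt η' (η'' x) x)
    (hq : HasDerivAt q (q' x) x) (hQ : HasDerivAt Q (q x) x)
    (hode : 1 / 2 * η'' x - q x * η' x = -lam * η x) :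
    HasDerivAt (fun y => (η' y - q y * η y) * exp (-Q y))
      ((q x ^ 2 - q' x - 2 * lam) * (η x * exp (-Q x))) x := by
  have hη'' : η'' x = 2 * q x * η' x - 2 * lam * η x := by linarith
  exact ((hη'.fun_sub (hq.fun_mul hη)).fun_mul hQ.fun_neg.exp).congr_deriv (by rw [hη'']; ring)

end Eigenfunction

/-- Models `η_ε e^{-Q}` on `(ε, 1/ε)`, with `w = W + C + 1` and `g = e^{-Q}`, so that `u g` is
the unnormalised density of `ν_ε`. -/
structure NormalizedProfile (w g : ℝ → ℝ) (S B : ℝ) (s : Set ℝ) (u : ℝ → ℝ) : Prop where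
  subset_Ioi : s ⊆ Ioi 0
  measurableSet : MeasurableSet s
  nonneg : ∀ x ∈ s, 0 ≤ u x
  le_bound : ∀ x ∈ s, u x ≤ S
  integrableOn_sq : IntegrableOn (fun x => u x ^ 2) s
  integral_sq : ∫ x in s, u x ^ 2 = 1
  integrableOn_weight_mul_sq : IntegrableOn (fun x => w x * u x ^ 2) s
  integral_weight_mul_sq_le : ∫ x in s, w x * u x ^ 2 ≤ B
  integrableOn_mul : IntegrableOn (fun x => u x * g x) s

theorem NormalizedProfile.mono {w g u : ℝ → ℝ} {S S' B B' : ℝ} {s : Set ℝ}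
    (h : NormalizedProfile w g S B s u) (hS : S ≤ S') (hB : B ≤ B') :
    NormalizedProfile w g S' B' s u :=
  { h with
    le_bound := fun x hx => (h.le_bound x hx).trans hS
    integral_weight_mul_sq_le := h.integral_weight_mul_sq_le.trans hB }

theorem normalizedProfile_of_hasDerivAt {a b lam C : ℝ} {u v W g : ℝ → ℝ} (ha₀ : 0 < a)
    (hab : a ≤ b) (hu : ∀ x ∈ Icc a b, HasDerivAt u (v x) x)
    (hv : ∀ x ∈ Icc a b, HasDerivAt v ((W x - 2 * lam) * u x) x) (hW : ContinuousOn W (Icc a b))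
    (hWC : ∀ x ∈ Icc a b, -C ≤ W x) (hg : ContinuousOn g (Icc a b)) (hu0 : ∀ x ∈ Ioo a b, 0 ≤ u x)
    (ha : u a = 0) (hb : u b = 0) (hu2 : ∫ x in a..b, u x ^ 2 = 1) :
    NormalizedProfile (fun x => W x + C + 1) g √(2 * lam + C + 1) (2 * lam + C + 1) (Ioo a b)
      u := by
  have hcu : ContinuousOn u (Icc a b) := fun x hx => (hu x hx).continuousAt.continuousWithinAt
  have hcv : ContinuousOn v (Icc a b) := fun x hx => (hv x hx).continuousAt.continuousWithinAt
  have iu2 : IntervalIntegrable (fun x => u x ^ 2) volume a b :=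
    (hcu.pow 2).intervalIntegrable_of_Icc hab
  have iWu2 : IntervalIntegrable (fun x => W x * u x ^ 2) volume a b :=
    (hW.mul (hcu.pow 2)).intervalIntegrable_of_Icc hab
  have henergy := integral_deriv_sq_add_integral_mul_sq hab hu hv hW ha hb
  rw [hu2, mul_one] at henergy
  have hWu2 : -C ≤ ∫ x in a..b, W x * u x ^ 2 :=
    calc -C = ∫ x in a..b, -C * u x ^ 2 := by rw [intervalIntegral.integral_const_mul, hu2, mul_one]
      _ ≤ ∫ x in a..b, W x * u x ^ 2 := integral_mono_on hab (iu2.const_mul _) iWu2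
          fun x hx => mul_le_mul_of_nonneg_right (hWC x hx) (sq_nonneg _)
  have hv2 : 0 ≤ ∫ x in a..b, v x ^ 2 := integral_nonneg hab fun x _ => sq_nonneg _
  refine ⟨fun x hx => ha₀.trans hx.1, measurableSet_Ioo, hu0, fun x hx => ?_,
    (hcu.pow 2).integrableOn_Icc.mono_set Ioo_subset_Icc_self,
    by rw [setIntegral_Ioo_eq_intervalIntegral hab, hu2],
    (((hW.add continuousOn_const).add continuousOn_const).mul (hcu.pow 2)).integrableOn_Icc.mono_set
      Ioo_subset_Icc_self, ?_, (hcu.mul hg).integrableOn_Icc.mono_set Ioo_subset_Icc_self⟩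
  · have hsup := sq_le_integral_sq_add_deriv_sq hab hu hcv ha (Ioo_subset_Icc_self hx)
    rw [hu2] at hsup
    exact (le_abs_self _).trans (abs_le_sqrt (by linarith))
  · rw [setIntegral_Ioo_eq_intervalIntegral hab]
    simp only [add_mul, one_mul]
    rw [integral_add (iWu2.add (iu2.const_mul _)) iu2, integral_add iWu2 (iu2.const_mul _),
      intervalIntegral.integral_const_mul, hu2]
    linarith

theorem normalizedProfile_of_eigenfunction {a b lam C : ℝ} {η η' η'' q q' Q W : ℝ → ℝ}
    (hq : ∀ x ∈ Ioi 0, HasDerivAt q (q' x) x) (hq' : ContinuousOn q' (Ioi 0))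
    (hQ : ∀ x ∈ Ioi 0, HasDerivAt Q (q x) x) (hW : ∀ x ∈ Ioi 0, W x = q x ^ 2 - q' x)
    (hWC : ∀ x ∈ Ioi 0, -C ≤ W x) (ha₀ : 0 < a) (hab : a ≤ b)
    (hη : ∀ x ∈ Icc a b, HasDerivAt η (η' x) x) (hη' : ∀ x ∈ Icc a b, HasDerivAt η' (η'' x) x)
    (hode : ∀ x ∈ Icc a b, 1 / 2 * η'' x - q x * η' x = -lam * η x)
    (hpos : ∀ x ∈ Ioo a b, 0 < η x) (ha : η a = 0) (hb : η b = 0)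
    (hnorm : ∫ x in a..b, η x ^ 2 * exp (-2 * Q x) = 1) :
    NormalizedProfile (fun x => W x + C + 1) (fun x => exp (-Q x)) √(2 * lam + C + 1)
      (2 * lam + C + 1) (Ioo a b) (fun x => η x * exp (-Q x)) := by
  have hsub : Icc a b ⊆ Ioi 0 := fun x hx => ha₀.trans_le hx.1
  have hcq : ContinuousOn q (Ioi 0) := fun x hx => (hq x hx).continuousAt.continuousWithinAt
  refine normalizedProfile_of_hasDerivAt ha₀ hab
    (fun x hx => hasDerivAt_mul_exp_neg (hη x hx) (hQ x (hsub hx))) (fun x hx => ?_)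
    ((((hcq.pow 2).sub hq').congr hW).mono hsub) (fun x hx => hWC x (hsub hx))
    (fun x hx => (hQ x (hsub hx)).continuousAt.neg.rexp.continuousWithinAt)
    (fun x hx => mul_nonneg (hpos x hx).le (exp_pos _).le) (by simp [ha]) (by simp [hb]) ?_
  · rw [hW x (hsub hx)]
    exact hasDerivAt_deriv_mul_exp_neg (hη x hx) (hη' x hx) (hq x (hsub hx)) (hQ x (hsub hx))
      (hode x hx)
  · rw [← hnorm]
    congr 1 with x
    rw [mul_pow, ← exp_nat_mul]
    ring_nf

/-- Hypotheses (H1) and (H2) for `w = W + C + 1` and `g = e^{-Q}`. -/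
structure AdmissibleWeights (w g : ℝ → ℝ) : Prop where
  continuousOn_g : ContinuousOn g (Ioi 0)
  g_pos : ∀ x ∈ Ioi 0, 0 < g x
  one_le_w : ∀ x ∈ Ioi 0, 1 ≤ w x
  tendsto_w : Tendsto w atTop atTop
  integrableOn_sq_div : IntegrableOn (fun x => g x ^ 2 / w x) (Ioi 0)

theorem admissibleWeights_of_H1_H2 {q q' Q W : ℝ → ℝ} {C : ℝ} (hq : ContinuousOn q (Ioi 0))
    (hq' : ContinuousOn q' (Ioi 0)) (hQ : ∀ x ∈ Ioi 0, HasDerivAt Q (q x) x)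
    (hW : ∀ x ∈ Ioi 0, W x = q x ^ 2 - q' x) (hWC : ∀ x ∈ Ioi 0, -C ≤ W x)
    (hW_top : Tendsto W atTop atTop)
    (hH2a : IntegrableOn (fun x => exp (-2 * Q x)) (Ioi 1))
    (hH2b : IntegrableOn (fun x => exp (-2 * Q x) / (W x + C + 1)) (Ioo 0 1)) :
    AdmissibleWeights (fun x => W x + C + 1) (fun x => exp (-Q x)) := by
  have hw : ∀ x ∈ Ioi 0, 1 ≤ W x + C + 1 := fun x hx => by linarith [hWC x hx]
  have hg : ContinuousOn (fun x => exp (-Q x)) (Ioi 0) :=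
    fun x hx => (hQ x hx).continuousAt.neg.rexp.continuousWithinAt
  have hsq : ∀ x, exp (-2 * Q x) = exp (-Q x) ^ 2 := fun x => by rw [← exp_nat_mul]; ring_nf
  simp only [hsq] at hH2a hH2b
  refine ⟨hg, fun x _ => exp_pos _, hw,
    tendsto_atTop_add_const_right _ _ (tendsto_atTop_add_const_right _ _ hW_top),
    integrableOn_Ioi_of_integrableOn_Ioo one_pos ?_ hH2b hH2a fun x hx => ?_⟩
  · exact (hg.pow 2).div ((((hq.pow 2).sub hq').congr hW).add continuousOn_const |>.add
      continuousOn_const) fun x hx => by linarith [hw x hx]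
  · have hx0 : x ∈ Ioi (0:ℝ) := mem_Ioi.mpr (one_pos.trans hx)
    rw [norm_of_nonneg (div_nonneg (sq_nonneg _) (by linarith [hw x hx0]))]
    exact div_le_self (sq_nonneg _) (hw x hx0)

section Uniform

variable {w g : ℝ → ℝ} {S B : ℝ} {s : Set ℝ} {u : ℝ → ℝ}

theorem NormalizedProfile.sq_le_mul_add_indicator_add_div (hu : NormalizedProfile w g S B s u)
    (hw : ∀ x ∈ s, 0 ≤ w x) (hg : ∀ x ∈ s, 0 ≤ g x) (hB : 0 < B) {a M c : ℝ}
    (hwM : ∀ x ∈ s, M ≤ x → 4 * B ≤ w x) (hc : 0 < c) (hgc : ∀ x ∈ s, a < x → x < M → c ≤ g x)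
    {x : ℝ} (hx : x ∈ s) :
    u x ^ 2 ≤
      S / c * (u x * g x) + (Iic a).indicator (fun _ => S ^ 2) x + w x * u x ^ 2 / (4 * B) := by
  have hu0 := hu.nonneg x hx
  have huS := hu.le_bound x hx
  have hug : 0 ≤ S / c * (u x * g x) := by have := hg x hx; have := hu0.trans huS; positivity
  have hwu : 0 ≤ w x * u x ^ 2 / (4 * B) := by have := hw x hx; positivity
  by_cases hxa : x ≤ a
  · rw [indicator_of_mem (show x ∈ Iic a from hxa)]
    nlinarith
  rw [indicator_of_notMem (show x ∉ Iic a from hxa), add_zero]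
  by_cases hxM : M ≤ x
  · have : u x ^ 2 ≤ w x * u x ^ 2 / (4 * B) := by
      rw [le_div_iff₀ (by positivity)]
      nlinarith [hwM x hx hxM, sq_nonneg (u x)]
    linarith
  · have hcg := hgc x hx (not_le.mp hxa) (not_le.mp hxM)
    have : u x ^ 2 ≤ S / c * (u x * g x) := by
      rw [div_mul_eq_mul_div, le_div_iff₀ hc]
      nlinarith [mul_le_mul_of_nonneg_left hcg (mul_nonneg (hu0.trans huS) hu0),
        mul_le_mul_of_nonneg_right (mul_le_mul_of_nonneg_left huS hu0) hc.le]
    linarith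

theorem NormalizedProfile.le_setIntegral_mul (hu : NormalizedProfile w g S B s u)
    (hw : ∀ x ∈ s, 0 ≤ w x) (hg : ∀ x ∈ s, 0 ≤ g x) (hS : 0 < S) (hB : 0 < B) {a M c : ℝ}
    (ha : 0 ≤ a) (haS : a * S ^ 2 ≤ 1 / 4) (hwM : ∀ x ∈ s, M ≤ x → 4 * B ≤ w x) (hc : 0 < c)
    (hgc : ∀ x ∈ s, a < x → x < M → c ≤ g x) :
    c / (2 * S) ≤ ∫ x in s, u x * g x := by
  obtain ⟨hind_int, hind⟩ := integrableOn_indicator_Iic_const_and_le hu.subset_Ioi ha (sq_nonneg S)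
  have i1 : IntegrableOn (fun x => S / c * (u x * g x)) s := hu.integrableOn_mul.const_mul _
  have i12 : IntegrableOn (fun x => S / c * (u x * g x) + (Iic a).indicator (fun _ => S ^ 2) x) s :=
    i1.add hind_int
  have i3 : IntegrableOn (fun x => w x * u x ^ 2 / (4 * B)) s :=
    hu.integrableOn_weight_mul_sq.div_const _
  have hint : ∫ x in s, u x ^ 2 ≤ ∫ x in s,
      (S / c * (u x * g x) + (Iic a).indicator (fun _ => S ^ 2) x + w x * u x ^ 2 / (4 * B)) :=
    setIntegral_mono_on hu.integrableOn_sq (i12.add i3) hu.measurableSet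
      fun x hx => hu.sq_le_mul_add_indicator_add_div hw hg hB hwM hc hgc hx
  rw [MeasureTheory.integral_add i12 i3, MeasureTheory.integral_add i1 hind_int,
    MeasureTheory.integral_const_mul, MeasureTheory.integral_div, hu.integral_sq] at hint
  have hweight : (∫ x in s, w x * u x ^ 2) / (4 * B) ≤ 1 / 4 := by
    rw [div_le_iff₀ (by positivity)]
    linarith [hu.integral_weight_mul_sq_le]
  have hhalf : 1 / 2 ≤ S / c * ∫ x in s, u x * g x := by linarith
  calc c / (2 * S) = c / S * (1 / 2) := by ring
    _ ≤ c / S * (S / c * ∫ x in s, u x * g x) := by gcongr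
    _ = ∫ x in s, u x * g x := by field_simp

theorem AdmissibleWeights.exists_pos_le_setIntegral_mul (hwg : AdmissibleWeights w g) (hS : 0 < S)
    (hB : 0 < B) : ∃ Z₀ > 0, ∀ s u, NormalizedProfile w g S B s u → Z₀ ≤ ∫ x in s, u x * g x := by
  set a := 1 / (4 * S ^ 2)
  have ha : 0 < a := by positivity
  have haS : a * S ^ 2 = 1 / 4 := by simp only [a]; field_simp
  obtain ⟨M, hM⟩ := eventually_atTop.mp (hwg.tendsto_w.eventually_ge_atTop (4 * B))
  set M' := max M a
  have hK : Icc a M' ⊆ Ioi 0 := fun x hx => ha.trans_le hx.1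
  obtain ⟨x₀, hx₀, hmin⟩ := isCompact_Icc.exists_isMinOn (nonempty_Icc.mpr (le_max_right M a))
    (hwg.continuousOn_g.mono hK)
  have hgx₀ := hwg.g_pos x₀ (hK hx₀)
  refine ⟨g x₀ / (2 * S), by positivity, fun s u hu => ?_⟩
  exact hu.le_setIntegral_mul (fun x hx => zero_le_one.trans (hwg.one_le_w x (hu.subset_Ioi hx)))
    (fun x hx => (hwg.g_pos x (hu.subset_Ioi hx)).le) hS hB ha.le haS.le
    (fun x _ hx => hM x ((le_max_left M a).trans hx)) hgx₀
    (fun x _ hax hxM => hmin ⟨hax.le, hxM.le⟩)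

theorem AdmissibleWeights.exists_Icc_setIntegral_diff_mul_le (hwg : AdmissibleWeights w g)
    (hB : 0 < B) {θ : ℝ} (hθ : 0 < θ) :
    ∃ a M, 0 < a ∧ ∀ S s u, NormalizedProfile w g S B s u →
      ∫ x in s \ Icc a M, u x * g x ≤ θ := by
  have hw : ∀ x ∈ Ioi 0, 0 < w x := fun x hx => zero_lt_one.trans_le (hwg.one_le_w x hx)
  set t := θ / B
  have ht : 0 < t := by positivity
  obtain ⟨a, M, ha, htail⟩ :=
    exists_setIntegral_Ioi_diff_Icc_lt hwg.integrableOn_sq_div (mul_pos ht hθ)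
  refine ⟨a, M, ha, fun S s u hu => ?_⟩
  have hsub : s \ Icc a M ⊆ Ioi 0 \ Icc a M := sdiff_subset_sdiff_left hu.subset_Ioi
  have hwu : ∫ x in s \ Icc a M, w x * u x ^ 2 ≤ B :=
    (setIntegral_mono_set hu.integrableOn_weight_mul_sq
      ((ae_restrict_iff' hu.measurableSet).mpr
        (ae_of_all _ fun x hx => mul_nonneg (hw x (hu.subset_Ioi hx)).le (sq_nonneg _)))
      sdiff_subset.eventuallyLE).trans hu.integral_weight_mul_sq_le
  have hgw : ∫ x in s \ Icc a M, g x ^ 2 / w x ≤ t * θ :=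
    (setIntegral_mono_set (hwg.integrableOn_sq_div.mono_set sdiff_subset)
      ((ae_restrict_iff' (measurableSet_Ioi.diff measurableSet_Icc)).mpr
        (ae_of_all _ fun x hx => div_nonneg (sq_nonneg _) (hw x hx.1).le))
      hsub.eventuallyLE).trans htail.le
  calc ∫ x in s \ Icc a M, u x * g x
      ≤ t / 2 * (∫ x in s \ Icc a M, w x * u x ^ 2) +
          1 / (2 * t) * ∫ x in s \ Icc a M, g x ^ 2 / w x :=
        setIntegral_mul_le_of_weight ht (hu.measurableSet.diff measurableSet_Icc)
          (fun x hx => hw x (hu.subset_Ioi hx.1)) (hu.integrableOn_mul.mono_set sdiff_subset)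
          (hu.integrableOn_weight_mul_sq.mono_set sdiff_subset)
          (hwg.integrableOn_sq_div.mono_set (hsub.trans sdiff_subset))
    _ ≤ t / 2 * B + 1 / (2 * t) * (t * θ) := by gcongr
    _ = θ := by simp only [t]; field_simp; ring

theorem NormalizedProfile.mul_nonneg (hu : NormalizedProfile w g S B s u)
    (hwg : AdmissibleWeights w g) : ∀ x ∈ s, 0 ≤ u x * g x :=
  fun x hx => _root_.mul_nonneg (hu.nonneg x hx) (hwg.g_pos x (hu.subset_Ioi hx)).le

theorem NormalizedProfile.isProbabilityMeasure_normalizedWithDensity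
    (hu : NormalizedProfile w g S B s u) (hwg : AdmissibleWeights w g) (hS : 0 < S) (hB : 0 < B) :
    IsProbabilityMeasure (normalizedWithDensity volume s fun x => u x * g x) := by
  obtain ⟨Z₀, hZ₀, hZ⟩ := hwg.exists_pos_le_setIntegral_mul hS hB
  exact _root_.isProbabilityMeasure_normalizedWithDensity hu.measurableSet hu.integrableOn_mul
    (hu.mul_nonneg hwg) (hZ₀.trans_le (hZ s u hu)).ne'

theorem AdmissibleWeights.exists_isCompact_normalizedWithDensity_compl_le
    (hwg : AdmissibleWeights w g) (hS : 0 < S) (hB : 0 < B) {δ : ℝ} (hδ : 0 < δ) :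
    ∃ K, IsCompact K ∧ K ⊆ Ioi 0 ∧ ∀ s u, NormalizedProfile w g S B s u →
      normalizedWithDensity volume s (fun x => u x * g x) Kᶜ ≤ ENNReal.ofReal δ := by
  obtain ⟨Z₀, hZ₀, hZ⟩ := hwg.exists_pos_le_setIntegral_mul hS hB
  obtain ⟨a, M, ha, htail⟩ := hwg.exists_Icc_setIntegral_diff_mul_le hB (mul_pos hδ hZ₀)
  refine ⟨Icc a M, isCompact_Icc, fun x hx => ha.trans_le hx.1, fun s u hu => ?_⟩
  rw [normalizedWithDensity_apply hu.measurableSet hu.integrableOn_mul (hu.mul_nonneg hwg)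
    measurableSet_Icc.compl, inter_comm, ← sdiff_eq]
  refine ENNReal.ofReal_le_ofReal ((div_le_iff₀ (hZ₀.trans_le (hZ s u hu))).mpr ?_)
  exact (htail S s u hu).trans (mul_le_mul_of_nonneg_left (hZ s u hu) hδ.le)

theorem AdmissibleWeights.exists_normalizedWithDensity_le (hwg : AdmissibleWeights w g)
    (hS : 0 < S) (hB : 0 < B) {δ : ℝ} (hδ : 0 < δ) :
    ∃ c, ∀ s u, NormalizedProfile w g S B s u → ∀ A, MeasurableSet A →
      normalizedWithDensity volume s (fun x => u x * g x) A ≤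
        ENNReal.ofReal c * volume A + ENNReal.ofReal δ := by
  obtain ⟨Z₀, hZ₀, hZ⟩ := hwg.exists_pos_le_setIntegral_mul hS hB
  obtain ⟨K, hK, hK0, htight⟩ := hwg.exists_isCompact_normalizedWithDensity_compl_le hS hB hδ
  obtain ⟨G, hG⟩ := hK.exists_bound_of_continuousOn (hwg.continuousOn_g.mono hK0)
  refine ⟨S * G / Z₀, fun s u hu A hA => ?_⟩
  have hdens : ∀ x ∈ K, s.indicator (fun x => u x * g x) x / ∫ y in s, u y * g y ≤ S * G / Z₀ := by
    intro x hx
    have hG0 : 0 ≤ G := (norm_nonneg _).trans (hG x hx)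
    by_cases hxs : x ∈ s
    · rw [indicator_of_mem hxs]
      exact div_le_div₀ (by positivity) (mul_le_mul (hu.le_bound x hxs)
        ((le_abs_self _).trans (hG x hx)) (hwg.g_pos x (hK0 hx)).le hS.le) hZ₀ (hZ s u hu)
    · rw [indicator_of_notMem hxs, zero_div]
      positivity
  have hlocal : normalizedWithDensity volume s (fun x => u x * g x) (A ∩ K) ≤
      ENNReal.ofReal (S * G / Z₀) * volume A :=
    calc _ = ∫⁻ x in A ∩ K, ENNReal.ofReal
          (s.indicator (fun x => u x * g x) x / ∫ y in s, u y * g y) :=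
          withDensity_apply _ (hA.inter hK.measurableSet)
      _ ≤ ∫⁻ _ in A ∩ K, ENNReal.ofReal (S * G / Z₀) :=
          setLIntegral_mono measurable_const fun x hx => ENNReal.ofReal_le_ofReal (hdens x hx.2)
      _ ≤ ENNReal.ofReal (S * G / Z₀) * volume A := by
          rw [setLIntegral_const]
          exact mul_le_mul_right (measure_mono inter_subset_left) _
  calc _ ≤ _ := measure_le_inter_add_sdiff _ A K
    _ ≤ _ := add_le_add hlocal ((measure_mono fun x hx => hx.2).trans (htight s u hu))

end Uniform

theorem AdmissibleWeights.tight_and_absolutelyContinuous {w g : ℝ → ℝ} {S B : ℝ} {ι : Type*}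
    (hwg : AdmissibleWeights w g) (hS : 0 < S) (hB : 0 < B) {I : Set ι} {ν : ι → Measure ℝ}
    {s : ι → Set ℝ} {u : ι → ℝ → ℝ} (hu : ∀ i ∈ I, NormalizedProfile w g S B (s i) (u i))
    (hν : ∀ i ∈ I, ν i = normalizedWithDensity volume (s i) fun x => u i x * g x) :
    (∀ δ > 0, ∃ K, IsCompact K ∧ K ⊆ Ioi 0 ∧ ∀ i ∈ I, ν i (Ioi 0 \ K) ≤ ENNReal.ofReal δ) ∧
    ∀ (is : ℕ → ι) (νlim : Measure ℝ), (∀ k, is k ∈ I) → IsProbabilityMeasure νlim →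
      (∀ f : ℝ →ᵇ ℝ, Tendsto (fun k => ∫ x, f x ∂ν (is k)) atTop (𝓝 (∫ x, f x ∂νlim))) →
      νlim ≪ volume := by
  refine ⟨fun δ hδ => ?_, fun is νlim his _ hconv => ?_⟩
  · obtain ⟨K, hK, hK0, htight⟩ :=
      hwg.exists_isCompact_normalizedWithDensity_compl_le hS hB hδ
    refine ⟨K, hK, hK0, fun i hi => ?_⟩
    rw [hν i hi]
    exact (measure_mono fun x hx => hx.2).trans (htight _ _ (hu i hi))
  · have : ∀ k, IsProbabilityMeasure (ν (is k)) := fun k => by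
      rw [hν _ (his k)]
      exact (hu _ (his k)).isProbabilityMeasure_normalizedWithDensity hwg hS hB
    refine absolutelyContinuous_of_forall_integral_tendsto hconv fun δ hδ => ?_
    obtain ⟨c, hc⟩ := hwg.exists_normalizedWithDensity_le hS hB hδ
    exact ⟨c, fun k A hA => by rw [hν _ (his k)]; exact hc _ _ (hu _ (his k)) A hA⟩

theorem stmt_8_general (q q' Q W : ℝ → ℝ)
    (hq : ∀ x ∈ Set.Ioi (0:ℝ), HasDerivAt q (q' x) x)
    (hq'cont : ContinuousOn q' (Set.Ioi 0))
    (hQ : ∀ x, Q x = ∫ y in (1:ℝ)..x, q y)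
    (hWdef : ∀ x ∈ Set.Ioi (0:ℝ), W x = q x ^ 2 - q' x)
    -- Hypothesis (H1)
    (C : ℝ) (hWlb : ∀ x ∈ Set.Ioi (0:ℝ), -C ≤ W x)
    (hWtop : Tendsto W atTop atTop)
    -- Hypothesis (H2)
    (hH2a : IntegrableOn (fun x => Real.exp (-2 * Q x)) (Set.Ioi 1))
    (hH2b : IntegrableOn (fun x => Real.exp (-2 * Q x) / (W x + C + 1)) (Set.Ioo 0 1))
    -- Family setup
    (Λ : ℝ) (lam : ℝ → ℝ) (η η' η'' : ℝ → ℝ → ℝ)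
    (hlam : ∀ ε ∈ Set.Ioo (0:ℝ) (1/2), lam ε ≤ Λ)
    (hη' : ∀ ε ∈ Set.Ioo (0:ℝ) (1/2), ∀ x ∈ Set.Icc ε (1/ε),
      HasDerivAt (η ε) (η' ε x) x)
    (hη'' : ∀ ε ∈ Set.Ioo (0:ℝ) (1/2), ∀ x ∈ Set.Icc ε (1/ε),
      HasDerivAt (η' ε) (η'' ε x) x)
    (hpos : ∀ ε ∈ Set.Ioo (0:ℝ) (1/2), ∀ x ∈ Set.Ioo ε (1/ε), 0 < η ε x)
    (hbd : ∀ ε ∈ Set.Ioo (0:ℝ) (1/2), η ε ε = 0 ∧ η ε (1/ε) = 0)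
    (hode : ∀ ε ∈ Set.Ioo (0:ℝ) (1/2), ∀ x ∈ Set.Icc ε (1/ε),
      (1/2) * η'' ε x - q x * η' ε x = -(lam ε) * η ε x)
    (hnorm : ∀ ε ∈ Set.Ioo (0:ℝ) (1/2),
      (∫ x in ε..(1/ε), (η ε x) ^ 2 * Real.exp (-2 * Q x)) = 1)
    -- the measures ν_ε
    (ν : ℝ → Measure ℝ)
    (hν : ∀ ε ∈ Set.Ioo (0:ℝ) (1/2), ν ε = volume.withDensity (fun x =>
      ENNReal.ofReal ((Set.Ioo ε (1/ε)).indicator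
        (fun y => η ε y * Real.exp (-2 * Q y)) x /
        (∫ y in ε..(1/ε), η ε y * Real.exp (-2 * Q y))))) :
    -- (i) tightness of the family (ν_ε)
    (∀ δ > 0, ∃ K : Set ℝ, IsCompact K ∧ K ⊆ Set.Ioi 0 ∧
      ∀ ε ∈ Set.Ioo (0:ℝ) (1/2), ν ε (Set.Ioi 0 \ K) ≤ ENNReal.ofReal δ) ∧
    -- (ii) any weak limit along a sequence ε_k → 0 is absolutely continuous
    (∀ (εs : ℕ → ℝ) (νlim : Measure ℝ),
      (∀ k, εs k ∈ Set.Ioo (0:ℝ) (1/2)) →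
      Tendsto εs atTop (nhds 0) →
      IsProbabilityMeasure νlim →
      (∀ f : ℝ →ᵇ ℝ,
        Tendsto (fun k => ∫ x, f x ∂(ν (εs k))) atTop (nhds (∫ x, f x ∂νlim))) →
      νlim ≪ volume) := by
  have hqc : ContinuousOn q (Ioi 0) := fun x hx => (hq x hx).continuousAt.continuousWithinAt
  have hQ' : ∀ x ∈ Ioi (0:ℝ), HasDerivAt Q (q x) x := fun x hx => by
    rw [show Q = _ from funext hQ]
    exact hasDerivAt_integral_of_continuousOn isOpen_Ioi ordConnected_Ioi hqc
      (mem_Ioi.mpr one_pos) hx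
  have hwg := admissibleWeights_of_H1_H2 hqc hq'cont hQ' hWdef hWlb hWtop hH2a hH2b
  set B := max (2 * Λ + C + 1) 1
  have hB : 0 < B := lt_max_of_lt_right one_pos
  have hε_le : ∀ ε ∈ Ioo (0:ℝ) (1/2), ε ≤ 1/ε := fun ε hε => by
    rw [le_div_iff₀ hε.1]
    nlinarith [hε.1, hε.2]
  have hprof : ∀ ε ∈ Ioo (0:ℝ) (1/2), NormalizedProfile (fun x => W x + C + 1)
      (fun x => exp (-Q x)) √B B (Ioo ε (1/ε)) (fun x => η ε x * exp (-Q x)) := fun ε hε => by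
    have hlamB : 2 * lam ε + C + 1 ≤ B := by linarith [hlam ε hε, le_max_left (2 * Λ + C + 1) 1]
    exact (normalizedProfile_of_eigenfunction hq hq'cont hQ' hWdef hWlb hε.1 (hε_le ε hε)
      (hη' ε hε) (hη'' ε hε) (hode ε hε) (hpos ε hε) (hbd ε hε).1 (hbd ε hε).2
      (hnorm ε hε)).mono (sqrt_le_sqrt hlamB) hlamB
  have hνeq : ∀ ε ∈ Ioo (0:ℝ) (1/2), ν ε = normalizedWithDensity volume (Ioo ε (1/ε))
      (fun x => η ε x * exp (-Q x) * exp (-Q x)) := fun ε hε => by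
    have hdens : (fun y => η ε y * exp (-2 * Q y)) = fun y => η ε y * exp (-Q y) * exp (-Q y) :=
      funext fun y => by rw [mul_assoc, ← exp_add]; ring_nf
    rw [hν ε hε, hdens, normalizedWithDensity, setIntegral_Ioo_eq_intervalIntegral (hε_le ε hε)]
  obtain ⟨htight, hac⟩ := hwg.tight_and_absolutelyContinuous (sqrt_pos.mpr hB) hB hprof hνeq
  exact ⟨htight, fun εs νlim hεs _ => hac εs νlim hεs⟩

theorem stmt_8 (q q' Q W : ℝ → ℝ)
    (hq : ∀ x ∈ Set.Ioi (0:ℝ), HasDerivAt q (q' x) x)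
    (hq'cont : ContinuousOn q' (Set.Ioi 0))
    (hQ : ∀ x, Q x = ∫ y in (1:ℝ)..x, q y)
    (hWdef : ∀ x ∈ Set.Ioi (0:ℝ), W x = q x ^ 2 - q' x)
    -- Hypothesis (H1)
    (C : ℝ) (hC : 0 < C) (hWlb : ∀ x ∈ Set.Ioi (0:ℝ), -C ≤ W x)
    (hWtop : Tendsto W atTop atTop)
    -- Hypothesis (H2)
    (hH2a : IntegrableOn (fun x => Real.exp (-2 * Q x)) (Set.Ioi 1))
    (hH2b : IntegrableOn (fun x => Real.exp (-2 * Q x) / (W x + C + 1)) (Set.Ioo 0 1))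
    -- Family setup
    (Λ : ℝ) (lam : ℝ → ℝ) (η η' η'' : ℝ → ℝ → ℝ)
    (hlam : ∀ ε ∈ Set.Ioo (0:ℝ) (1/2), lam ε ≤ Λ)
    (hη' : ∀ ε ∈ Set.Ioo (0:ℝ) (1/2), ∀ x ∈ Set.Icc ε (1/ε),
      HasDerivAt (η ε) (η' ε x) x)
    (hη'' : ∀ ε ∈ Set.Ioo (0:ℝ) (1/2), ∀ x ∈ Set.Icc ε (1/ε),
      HasDerivAt (η' ε) (η'' ε x) x)
    (hη''cont : ∀ ε ∈ Set.Ioo (0:ℝ) (1/2), ContinuousOn (η'' ε) (Set.Icc ε (1/ε)))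
    (hpos : ∀ ε ∈ Set.Ioo (0:ℝ) (1/2), ∀ x ∈ Set.Ioo ε (1/ε), 0 < η ε x)
    (hbd : ∀ ε ∈ Set.Ioo (0:ℝ) (1/2), η ε ε = 0 ∧ η ε (1/ε) = 0)
    (hode : ∀ ε ∈ Set.Ioo (0:ℝ) (1/2), ∀ x ∈ Set.Icc ε (1/ε),
      (1/2) * η'' ε x - q x * η' ε x = -(lam ε) * η ε x)
    (hnorm : ∀ ε ∈ Set.Ioo (0:ℝ) (1/2),
      (∫ x in ε..(1/ε), (η ε x) ^ 2 * Real.exp (-2 * Q x)) = 1)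
    -- the measures ν_ε
    (ν : ℝ → Measure ℝ)
    (hν : ∀ ε ∈ Set.Ioo (0:ℝ) (1/2), ν ε = volume.withDensity (fun x =>
      ENNReal.ofReal ((Set.Ioo ε (1/ε)).indicator
        (fun y => η ε y * Real.exp (-2 * Q y)) x /
        (∫ y in ε..(1/ε), η ε y * Real.exp (-2 * Q y))))) :
    -- (i) tightness of the family (ν_ε)
    (∀ δ > 0, ∃ K : Set ℝ, IsCompact K ∧ K ⊆ Set.Ioi 0 ∧
      ∀ ε ∈ Set.Ioo (0:ℝ) (1/2), ν ε (Set.Ioi 0 \ K) ≤ ENNReal.ofReal δ) ∧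
    -- (ii) any weak limit along a sequence ε_k → 0 is absolutely continuous
    (∀ (εs : ℕ → ℝ) (νlim : Measure ℝ),
      (∀ k, εs k ∈ Set.Ioo (0:ℝ) (1/2)) →
      Tendsto εs atTop (nhds 0) →
      IsProbabilityMeasure νlim →
      (∀ f : ℝ →ᵇ ℝ,
        Tendsto (fun k => ∫ x, f x ∂(ν (εs k))) atTop (nhds (∫ x, f x ∂νlim))) →
      νlim ≪ volume) :=
  stmt_8_general q q' Q W hq hq'cont hQ hWdef C hWlb hWtop hH2a hH2b Λ lam η η' η'' hlam hη' hη''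
    hpos hbd hode hnorm ν hν
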